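/- arXiv:gr-qc/0103107 — 8 statements merged into one kernel-verified Lean document; each statement's English description precedes it below -/
import Mathlib

section
/- Let f : ℝⁿ → ℝⁿ be smooth, U ⊆ ℝⁿ open, M ⊆ ℝⁿ closed and invariant under the flow of f. Suppose F : U → ℝ is continuous and F ∘ x is strictly monotone for any solution x of x' = f(x) as long as x(t) ∈ U ∩ M. Then no solution of x' = f(x) whose image is contained in U ∩ M has an ω-limit point in U. -/
open Set Filter Topology

/-- `x` solves `x' = f ∘ x` on the (possibly infinite) interval `(a, b)`. -/
def SolOn {n : ℕ} (f : (Fin n → ℝ) → (Fin n → ℝ)) (a b : EReal)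
    (x : ℝ → (Fin n → ℝ)) : Prop :=
  ∀ t : ℝ, a < (t : EReal) → (t : EReal) < b → HasDerivAt x (f (x t)) t

/-- `x` is a solution of `x' = f ∘ x` on the maximal existence interval `(a, b)`:
any solution extending `x` has the same existence interval. -/
def IsMaxSol {n : ℕ} (f : (Fin n → ℝ) → (Fin n → ℝ)) (a b : EReal)
    (x : ℝ → (Fin n → ℝ)) : Prop :=
  a < b ∧ SolOn f a b x ∧
    ∀ (a' b' : EReal) (y : ℝ → (Fin n → ℝ)), SolOn f a' b' y → a' ≤ a → b ≤ b' →
      (∀ t : ℝ, a < (t : EReal) → (t : EReal) < b → y t = x t) → a' = a ∧ b' = b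

/-- `p` is an ω-limit point of the solution `x` defined on `(a, b)`: there is a
sequence `tₖ → b` in `(a, b)` with `x(tₖ) → p`. -/
def OmegaLimitPt {n : ℕ} (a b : EReal) (x : ℝ → (Fin n → ℝ)) (p : Fin n → ℝ) : Prop :=
  ∃ t : ℕ → ℝ, (∀ k, a < (t k : EReal) ∧ (t k : EReal) < b) ∧
    Tendsto (fun k => (t k : EReal)) atTop (nhds b) ∧
    Tendsto (fun k => x (t k)) atTop (nhds p)

/-- A set `M` is invariant under the flow of `f`: any solution meeting `M` stays in `M`. -/
def FlowInvariant {n : ℕ} (f : (Fin n → ℝ) → (Fin n → ℝ)) (M : Set (Fin n → ℝ)) : Prop :=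
  ∀ (a b : EReal) (x : ℝ → (Fin n → ℝ)), SolOn f a b x →
    ∀ t₀ : ℝ, a < (t₀ : EReal) → (t₀ : EReal) < b → x t₀ ∈ M →
    ∀ t₁ : ℝ, a < (t₁ : EReal) → (t₁ : EReal) < b → x t₁ ∈ M

open Metric Bornology

lemma smul_lipschitz {E : Type*} [NormedAddCommGroup E] [NormedSpace ℝ E]
    {v : E → E} {K : NNReal} {S : Set E} (hv : LipschitzOnWith K v S) {σ : ℝ}
    (hσ : σ = 1 ∨ σ = -1) : LipschitzOnWith K (fun q => σ • v q) S := by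
  intro q hq q' hq'
  have h := hv hq hq'
  rcases hσ with h1 | h1 <;> subst h1 <;>
    simpa [one_smul, neg_one_smul, edist_neg_neg] using h

lemma exists_lipschitzOnWith_closedBall {E F : Type*} [NormedAddCommGroup E] [NormedSpace ℝ E] [ProperSpace E]
    [NormedAddCommGroup F] [NormedSpace ℝ F] {f : E → F} (hf : ContDiff ℝ 1 f) (c : E) (r : ℝ) :
    ∃ K : NNReal, LipschitzOnWith K f (closedBall c r) := by
  have hc : Continuous (fderiv ℝ f) := hf.continuous_fderiv one_ne_zero
  obtain ⟨C, hC⟩ := (isCompact_closedBall c r).exists_bound_of_continuousOn hc.continuousOn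
  refine ⟨⟨max C 0, le_max_right _ _⟩, Convex.lipschitzOnWith_of_nnnorm_fderiv_le
    (fun q _ => hf.differentiable one_ne_zero q) (fun q hq => ?_) (convex_closedBall c r)⟩
  change ‖fderiv ℝ f q‖ ≤ max C 0
  exact (hC q hq).trans (le_max_left _ _)

lemma gronwall_confine {E : Type*} [NormedAddCommGroup E] [NormedSpace ℝ E]
    {v : E → E} {K : NNReal} {S : Set E} (hv : LipschitzOnWith K v S)
    {T ρ : ℝ} (hT : 0 ≤ T) (hρ : 0 < ρ) {x z : ℝ → E}
    (hx : ∀ t ∈ Icc 0 T, HasDerivAt x (v (x t)) t)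
    (hz : ∀ t ∈ Icc 0 T, HasDerivAt z (v (z t)) t)
    (hball : ∀ t ∈ Icc 0 T, closedBall (z t) ρ ⊆ S)
    (h0 : dist (x 0) (z 0) * Real.exp (K * T) < ρ) :
    ∀ t ∈ Icc 0 T, dist (x t) (z t) ≤ dist (x 0) (z 0) * Real.exp (K * T) := by
  have hxc : ContinuousOn x (Icc 0 T) := fun t ht => (hx t ht).continuousAt.continuousWithinAt
  have hzc : ContinuousOn z (Icc 0 T) := fun t ht => (hz t ht).continuousAt.continuousWithinAt
  have key : ∀ τ ∈ Icc (0:ℝ) T, (∀ s ∈ Ico (0:ℝ) τ, dist (x s) (z s) < ρ) →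
      dist (x τ) (z τ) ≤ dist (x 0) (z 0) * Real.exp (K * T) := by
    intro τ hτ hsmall
    have hsub : Icc (0:ℝ) τ ⊆ Icc 0 T := Icc_subset_Icc_right hτ.2
    have hsub' : Ico (0:ℝ) τ ⊆ Icc 0 T := fun s hs => ⟨hs.1, hs.2.le.trans hτ.2⟩
    have hb := dist_le_of_trajectories_ODE_of_mem (v := fun _ : ℝ => v) (s := fun _ : ℝ => S)
      (K := K) (fun _ _ => hv) (hxc.mono hsub)
      (fun s hs => (hx s (hsub' hs)).hasDerivWithinAt)
      (fun s hs => hball s (hsub' hs) (mem_closedBall.mpr (hsmall s hs).le))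
      (hzc.mono hsub)
      (fun s hs => (hz s (hsub' hs)).hasDerivWithinAt)
      (fun s hs => hball s (hsub' hs) (mem_closedBall_self hρ.le))
      le_rfl τ ⟨hτ.1, le_rfl⟩
    rw [sub_zero] at hb
    refine hb.trans (mul_le_mul_of_nonneg_left (Real.exp_le_exp.mpr ?_) dist_nonneg)
    exact mul_le_mul_of_nonneg_left hτ.2 K.2
  have conf : ∀ t ∈ Icc (0:ℝ) T, dist (x t) (z t) < ρ := by
    by_contra hcon
    push_neg at hcon
    obtain ⟨t₁, ht₁, ht₁ρ⟩ := hcon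
    set B := Icc (0:ℝ) T ∩ {t : ℝ | ρ ≤ dist (x t) (z t)} with hBdef
    have hBne : B.Nonempty := ⟨t₁, ht₁, ht₁ρ⟩
    have hBc : IsClosed B := by
      have hcd : ContinuousOn (fun t => dist (x t) (z t)) (Icc 0 T) := fun t ht => (hxc t ht).dist (hzc t ht)
      have : B = Icc (0:ℝ) T ∩ (fun t => dist (x t) (z t)) ⁻¹' Ici ρ := rfl
      rw [this]
      exact hcd.preimage_isClosed_of_isClosed isClosed_Icc isClosed_Ici
    have hBbdd : BddBelow B := ⟨0, fun s hs => hs.1.1⟩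
    have hτB : sInf B ∈ B := hBc.csInf_mem hBne hBbdd
    have h00 : dist (x 0) (z 0) < ρ :=
      lt_of_le_of_lt (le_mul_of_one_le_right dist_nonneg (Real.one_le_exp (by positivity))) h0
    have hτ0 : 0 < sInf B := by
      rcases (lt_or_eq_of_le hτB.1.1) with h | h
      · exact h
      · exact absurd (h ▸ hτB.2) (not_le.mpr h00)
    have hlt : ∀ s ∈ Ico (0:ℝ) (sInf B), dist (x s) (z s) < ρ := by
      intro s hs
      by_contra h
      push_neg at h
      exact absurd (csInf_le hBbdd ⟨⟨hs.1, hs.2.le.trans hτB.1.2⟩, h⟩) (not_le.mpr hs.2)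
    exact absurd (hτB.2.trans (key _ hτB.1 hlt)) (not_le.mpr h0)
  exact fun t ht => key t ht fun s hs => conf s ⟨hs.1, hs.2.le.trans ht.2⟩

/-- The monotonicity principle. -/
theorem monotonicity_principle {n : ℕ} (f : (Fin n → ℝ) → (Fin n → ℝ))
    (hf : ContDiff ℝ (⊤ : ℕ∞) f) (U : Set (Fin n → ℝ)) (hU : IsOpen U)
    (M : Set (Fin n → ℝ)) (hM : IsClosed M) (hMinv : FlowInvariant f M)
    (F : (Fin n → ℝ) → ℝ) (hF : ContinuousOn F U)
    (hmono : ∀ (a b : EReal) (x : ℝ → (Fin n → ℝ)), SolOn f a b x →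
      (∀ t : ℝ, a < (t : EReal) → (t : EReal) < b → x t ∈ U ∩ M) →
      StrictMonoOn (F ∘ x) {t : ℝ | a < (t : EReal) ∧ (t : EReal) < b} ∨
      StrictAntiOn (F ∘ x) {t : ℝ | a < (t : EReal) ∧ (t : EReal) < b}) :
    ∀ (a b : EReal) (x : ℝ → (Fin n → ℝ)), IsMaxSol f a b x →
      (∀ t : ℝ, a < (t : EReal) → (t : EReal) < b → x t ∈ U ∩ M) →
      ∀ p ∈ U, ¬ OmegaLimitPt a b x p := by
  intro a b x hmax hxUM p hp hω
  obtain ⟨t, htab, htb, htp⟩ := hω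
  have hsol : SolOn f a b x := hmax.2.1
  have hab : a < b := hmax.1
  have hf1 : ContDiff ℝ 1 f := hf.of_le (by simp)
  have hbcases : (∃ β : ℝ, b = (β : EReal)) ∨ b = ⊤ := by
    induction b using EReal.rec with
    | bot => exact absurd hab not_lt_bot
    | coe β => exact Or.inl ⟨β, rfl⟩
    | top => exact Or.inr rfl
  rcases hbcases with ⟨β, rfl⟩ | rfl
  · -- b = β finite: the solution can be extended beyond β, contradicting maximality
    clear hmono hF hp hU
    have htkβ : ∀ k, t k < β := fun k => EReal.coe_lt_coe_iff.mp (htab k).2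
    have htkβ' : Tendsto t atTop (𝓝 β) := EReal.tendsto_coe.mp htb
    obtain ⟨z, hzβ, ε, hε, hzsol⟩ :=
      ContDiffAt.exists_forall_mem_closedBall_exists_eq_forall_mem_Ioo_hasDerivAt₀ (x₀ := p) hf1.contDiffAt β
    have hzc : ContinuousOn z (Icc (β - ε/2) (β + ε/2)) := fun s hs =>
      (hzsol s ⟨by cases hs; linarith, by cases hs; linarith⟩).continuousAt.continuousWithinAt
    obtain ⟨R₀, hR₀⟩ :=
      ((isCompact_Icc.image_of_continuousOn hzc).isBounded).subset_closedBall (0 : Fin n → ℝ)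
    obtain ⟨K, hK⟩ := exists_lipschitzOnWith_closedBall hf1 (0 : Fin n → ℝ) (R₀ + 1)
    have hKf : LipschitzOnWith K (fun q => (-1 : ℝ) • f q) (closedBall 0 (R₀ + 1)) :=
      smul_lipschitz hK (Or.inr rfl)
    have hzcontβ : ContinuousAt z β :=
      (hzsol β ⟨by linarith, by linarith⟩).continuousAt
    have hztk : Tendsto (fun k => z (t k)) atTop (𝓝 p) := by
      have h1 := hzcontβ.tendsto.comp htkβ'
      rwa [hzβ] at h1
    have hdist : Tendsto (fun k => dist (x (t k)) (z (t k)) * Real.exp (K * ε)) atTop (𝓝 0) := by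
      have h1 : Tendsto (fun k => dist (x (t k)) (z (t k))) atTop (𝓝 0) := by
        simpa using htp.dist hztk
      simpa using h1.mul_const (Real.exp (K * ε))
    obtain ⟨k₀, hk₀⟩ :=
      (htkβ'.eventually (eventually_gt_nhds (show β - ε/2 < β by linarith))).exists
    -- uniqueness: x = z on [t k₀, β)
    have heq : ∀ s ∈ Ico (t k₀) β, x s = z s := by
      intro s hs
      have hsa : a < (s : EReal) := lt_of_lt_of_le (htab k₀).1 (EReal.coe_le_coe_iff.mpr hs.1)
      have hsβ2 : β - ε/2 < s := lt_of_lt_of_le hk₀ hs.1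
      rw [← dist_eq_zero]
      have hle0 : dist (x s) (z s) ≤ 0 := by
        refine ge_of_tendsto hdist ?_
        filter_upwards [htkβ'.eventually (eventually_gt_nhds hs.2),
          hdist.eventually_lt_const one_pos] with k hk1 hk2
        have hTnn : 0 ≤ t k - s := by linarith
        have hTε : t k - s ≤ ε := by have := htkβ k; linarith
        have hexp : Real.exp (K * (t k - s)) ≤ Real.exp (K * ε) :=
          Real.exp_le_exp.mpr (mul_le_mul_of_nonneg_left hTε K.2)
        have hx' : ∀ u ∈ Icc (0:ℝ) (t k - s),
            HasDerivAt (fun u => x (t k - u)) ((-1 : ℝ) • f (x (t k - u))) u := by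
          intro u hu
          have hm1 : a < ((t k - u : ℝ) : EReal) :=
            lt_of_lt_of_le hsa (EReal.coe_le_coe_iff.mpr (by cases hu; linarith))
          have hm2 : ((t k - u : ℝ) : EReal) < (β : EReal) :=
            EReal.coe_lt_coe_iff.mpr (by have := htkβ k; cases hu; linarith)
          have hinner : HasDerivAt (fun u : ℝ => t k - u) (-1) u :=
            (hasDerivAt_id u).const_sub (t k)
          simpa [Function.comp_def] using (hsol _ hm1 hm2).scomp u hinner
        have hz' : ∀ u ∈ Icc (0:ℝ) (t k - s),
            HasDerivAt (fun u => z (t k - u)) ((-1 : ℝ) • f (z (t k - u))) u := by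
          intro u hu
          have hm : t k - u ∈ Ioo (β - ε) (β + ε) := by
            have := htkβ k; cases hu; constructor <;> linarith
          have hinner : HasDerivAt (fun u : ℝ => t k - u) (-1) u :=
            (hasDerivAt_id u).const_sub (t k)
          simpa [Function.comp_def] using (hzsol _ hm).scomp u hinner
        have hball : ∀ u ∈ Icc (0:ℝ) (t k - s),
            closedBall (z (t k - u)) 1 ⊆ closedBall (0 : Fin n → ℝ) (R₀ + 1) := by
          intro u hu q hq
          have hmem : z (t k - u) ∈ closedBall (0 : Fin n → ℝ) R₀ := by
            refine hR₀ ⟨t k - u, ?_, rfl⟩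
            have := htkβ k; cases hu; constructor <;> linarith
          rw [mem_closedBall] at *
          calc dist q 0 ≤ dist q (z (t k - u)) + dist (z (t k - u)) 0 := dist_triangle _ _ _
            _ ≤ 1 + R₀ := add_le_add hq hmem
            _ = R₀ + 1 := by ring
        have h0 : dist (x (t k - 0)) (z (t k - 0)) * Real.exp (K * (t k - s)) < 1 := by
          rw [sub_zero]
          exact lt_of_le_of_lt (mul_le_mul_of_nonneg_left hexp dist_nonneg) hk2
        have hgr := gronwall_confine hKf hTnn one_pos hx' hz' hball h0 (t k - s) ⟨hTnn, le_rfl⟩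
        rw [sub_zero, sub_sub_cancel] at hgr
        exact hgr.trans (mul_le_mul_of_nonneg_left hexp dist_nonneg)
      exact le_antisymm hle0 dist_nonneg
    -- extension
    set y : ℝ → (Fin n → ℝ) := fun u => if u < β then x u else z u with hydef
    have hysol : SolOn f a ((β + ε/2 : ℝ) : EReal) y := by
      intro u hu1 hu2
      rcases lt_or_ge u β with hu | hu
      · have hyx : y =ᶠ[𝓝 u] x := by
          filter_upwards [Iio_mem_nhds hu] with v hv
          exact if_pos hv
        have hd := (hsol u hu1 (EReal.coe_lt_coe_iff.mpr hu)).congr_of_eventuallyEq hyx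
        simpa [hydef, if_pos hu] using hd
      · have hu2' : u < β + ε/2 := EReal.coe_lt_coe_iff.mp hu2
        have h1 : t k₀ < u := lt_of_lt_of_le (htkβ k₀) hu
        have hyz : y =ᶠ[𝓝 u] z := by
          filter_upwards [Ioo_mem_nhds h1 (show u < β + ε by linarith)] with v hv
          by_cases hvβ : v < β
          · rw [hydef]; simp only [if_pos hvβ]; exact heq v ⟨hv.1.le, hvβ⟩
          · exact if_neg hvβ
        have hd := (hzsol u ⟨by linarith, by linarith⟩).congr_of_eventuallyEq hyz
        simpa [hydef, if_neg (not_lt.mpr hu)] using hd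
    have hcmp := hmax.2.2 a ((β + ε/2 : ℝ) : EReal) y hysol le_rfl
      (EReal.coe_le_coe_iff.mpr (by linarith))
      (fun u _ hu2 => if_pos (EReal.coe_lt_coe_iff.mp hu2))
    have : β + ε/2 = β := EReal.coe_eq_coe_iff.mp hcmp.2
    linarith
  · -- b = ⊤
    obtain ⟨G, hGc, hGx, hGd⟩ : ∃ G : (Fin n → ℝ) → ℝ, ContinuousOn G U ∧
        StrictMonoOn (G ∘ x) {s : ℝ | a < (s : EReal) ∧ (s : EReal) < ⊤} ∧
        (∀ (a' b' : EReal) (y : ℝ → (Fin n → ℝ)), SolOn f a' b' y →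
          (∀ s : ℝ, a' < (s : EReal) → (s : EReal) < b' → y s ∈ U ∩ M) →
          StrictMonoOn (G ∘ y) {s : ℝ | a' < (s : EReal) ∧ (s : EReal) < b'} ∨
          StrictAntiOn (G ∘ y) {s : ℝ | a' < (s : EReal) ∧ (s : EReal) < b'}) := by
      rcases hmono a ⊤ x hsol hxUM with h | h
      · exact ⟨F, hF, h, hmono⟩
      · refine ⟨fun q => -F q, hF.neg, ?_, ?_⟩
        · intro s hs u hu hsu
          simpa using h hs hu hsu
        · intro a' b' y hy hyUM
          rcases hmono a' b' y hy hyUM with h' | h'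
          · exact Or.inr fun s hs u hu hsu => by simpa using h' hs hu hsu
          · exact Or.inl fun s hs u hu hsu => by simpa using h' hs hu hsu
    set L := G p with hLdef
    have hGp : ContinuousAt G p := hGc.continuousAt (hU.mem_nhds hp)
    have htk_top : Tendsto t atTop atTop := by
      rw [EReal.tendsto_nhds_top_iff_real] at htb
      exact tendsto_atTop.mpr fun C => (htb C).mono fun k hk => (EReal.coe_lt_coe_iff.mp hk).le
    have hGtk : Tendsto (fun k => G (x (t k))) atTop (𝓝 L) := hGp.tendsto.comp htp
    have hmemk : ∀ k, t k ∈ {s : ℝ | a < (s : EReal) ∧ (s : EReal) < ⊤} := fun k =>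
      ⟨(htab k).1, (htab k).2⟩
    have hle : ∀ k, G (x (t k)) ≤ L := fun k =>
      ge_of_tendsto hGtk ((htk_top.eventually_gt_atTop (t k)).mono fun j hj =>
        (hGx (hmemk k) (hmemk j) hj).le)
    have hlt : ∀ s : ℝ, a < (s : EReal) → G (x s) < L := by
      intro s hs
      obtain ⟨k, hk⟩ := (htk_top.eventually_gt_atTop s).exists
      exact lt_of_lt_of_le (hGx ⟨hs, EReal.coe_lt_top s⟩ (hmemk k) hk) (hle k)
    have hpM : p ∈ M :=
      hM.mem_of_tendsto htp (Eventually.of_forall fun k => (hxUM _ (htab k).1 (htab k).2).2)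
    obtain ⟨z, hz0, ε, hε, hzsol₀⟩ :=
      ContDiffAt.exists_forall_mem_closedBall_exists_eq_forall_mem_Ioo_hasDerivAt₀ (x₀ := p) hf1.contDiffAt 0
    have hzsol : ∀ s ∈ Ioo (-ε) ε, HasDerivAt z (f (z s)) s := by
      intro s hs
      exact hzsol₀ s (by cases hs; constructor <;> linarith)
    have hzM : ∀ s ∈ Ioo (-ε) ε, z s ∈ M := by
      have hS : SolOn f ((-ε : ℝ) : EReal) ((ε : ℝ) : EReal) z := fun s h1 h2 =>
        hzsol s ⟨EReal.coe_lt_coe_iff.mp h1, EReal.coe_lt_coe_iff.mp h2⟩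
      intro s hs
      exact hMinv _ _ z hS 0 (EReal.coe_lt_coe_iff.mpr (by linarith))
        (EReal.coe_lt_coe_iff.mpr hε) (hz0 ▸ hpM) s
        (EReal.coe_lt_coe_iff.mpr hs.1) (EReal.coe_lt_coe_iff.mpr hs.2)
    have hzcont0 : ContinuousAt z 0 := (hzsol 0 ⟨by linarith, hε⟩).continuousAt
    have hnb : ∀ᶠ s in 𝓝 (0:ℝ), z s ∈ U := hzcont0.eventually_mem (hz0 ▸ hU.mem_nhds hp)
    obtain ⟨δ₀, hδ₀, hδ₀U⟩ := Metric.eventually_nhds_iff_ball.mp hnb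
    set d := min δ₀ ε / 2 with hddef
    have hd0 : 0 < d := by positivity
    have hdδ : d < δ₀ := by
      have : min δ₀ ε ≤ δ₀ := min_le_left _ _
      rw [hddef]; linarith
    have hdε : d < ε := by
      have : min δ₀ ε ≤ ε := min_le_right _ _
      rw [hddef]; linarith
    have hzU : ∀ s ∈ Icc (-d) d, z s ∈ U ∩ M := by
      intro s hs
      have habs : |s| ≤ d := abs_le.mpr hs
      refine ⟨hδ₀U s ?_, hzM s ⟨by cases abs_le.mp habs; linarith, by cases abs_le.mp habs; linarith⟩⟩
      rw [mem_ball, Real.dist_eq, sub_zero]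
      exact lt_of_le_of_lt habs hdδ
    have hzsolI : SolOn f ((-d : ℝ) : EReal) ((d : ℝ) : EReal) z := fun s h1 h2 =>
      hzsol s ⟨by have := EReal.coe_lt_coe_iff.mp h1; linarith,
        by have := EReal.coe_lt_coe_iff.mp h2; linarith⟩
    have hGz := hGd ((-d : ℝ) : EReal) ((d : ℝ) : EReal) z hzsolI
      (fun s h1 h2 => hzU s ⟨(EReal.coe_lt_coe_iff.mp h1).le, (EReal.coe_lt_coe_iff.mp h2).le⟩)
    have hmem0 : (0:ℝ) ∈ {s : ℝ | ((-d : ℝ) : EReal) < (s : EReal) ∧ (s : EReal) < ((d : ℝ) : EReal)} :=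
      ⟨EReal.coe_lt_coe_iff.mpr (by linarith), EReal.coe_lt_coe_iff.mpr hd0⟩
    obtain ⟨σ, hσ, hLσ⟩ : ∃ σ : ℝ, (σ = 1 ∨ σ = -1) ∧ L < G (z (σ * (d/2))) := by
      rcases hGz with h | h
      · refine ⟨1, Or.inl rfl, ?_⟩
        have hmemh : (d/2 : ℝ) ∈ {s : ℝ | ((-d : ℝ) : EReal) < (s : EReal) ∧ (s : EReal) < ((d : ℝ) : EReal)} :=
          ⟨EReal.coe_lt_coe_iff.mpr (by linarith), EReal.coe_lt_coe_iff.mpr (by linarith)⟩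
        have := h hmem0 hmemh (by linarith)
        simpa [hz0] using this
      · refine ⟨-1, Or.inr rfl, ?_⟩
        have hmemh : (-(d/2) : ℝ) ∈ {s : ℝ | ((-d : ℝ) : EReal) < (s : EReal) ∧ (s : EReal) < ((d : ℝ) : EReal)} :=
          ⟨EReal.coe_lt_coe_iff.mpr (by linarith), EReal.coe_lt_coe_iff.mpr (by linarith)⟩
        have := h hmemh hmem0 (by linarith)
        simpa [hz0] using this
    have hσabs : ∀ s : ℝ, |σ * s| = |s| := by
      intro s; rcases hσ with h | h <;> rw [h] <;> simp [abs_mul]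
    have hσd : σ * (d/2) ∈ Icc (-d) d := by
      have : |σ * (d/2)| ≤ d := by rw [hσabs]; rw [abs_of_nonneg (by linarith)]; linarith
      exact abs_le.mp this |> fun h => ⟨h.1, h.2⟩
    have hzcI : ContinuousOn z (Icc (-(d/2)) (d/2)) := fun s hs =>
      (hzsol s ⟨by cases hs; linarith, by cases hs; linarith⟩).continuousAt.continuousWithinAt
    obtain ⟨R₀, hR₀⟩ :=
      ((isCompact_Icc.image_of_continuousOn hzcI).isBounded).subset_closedBall (0 : Fin n → ℝ)
    obtain ⟨K, hK⟩ := exists_lipschitzOnWith_closedBall hf1 (0 : Fin n → ℝ) (R₀ + 1)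
    have hKσ : LipschitzOnWith K (fun q => σ • f q) (closedBall 0 (R₀ + 1)) :=
      smul_lipschitz hK hσ
    have hzd2U : z (σ * (d/2)) ∈ U := (hzU _ hσd).1
    have hGzd : ContinuousAt G (z (σ * (d/2))) := hGc.continuousAt (hU.mem_nhds hzd2U)
    have hevU : ∀ᶠ q in 𝓝 (z (σ * (d/2))), q ∈ U := hU.mem_nhds hzd2U
    have hev : ∀ᶠ q in 𝓝 (z (σ * (d/2))), q ∈ U ∧ L < G q :=
      hevU.and (hGzd.eventually (eventually_gt_nhds hLσ))
    obtain ⟨ε', hε'pos, hε'⟩ := Metric.eventually_nhds_iff_ball.mp hev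
    have hdist0 : Tendsto (fun k => dist (x (t k)) p * Real.exp (K * (d/2))) atTop (𝓝 0) := by
      have h1 : Tendsto (fun k => dist (x (t k)) p) atTop (𝓝 0) :=
        tendsto_iff_dist_tendsto_zero.mp htp
      simpa using h1.mul_const (Real.exp (K * (d/2)))
    obtain ⟨k, hk1, hk2⟩ := ((htk_top.eventually_gt_atTop (t 0 + d/2)).and
      (hdist0.eventually_lt_const (lt_min one_pos hε'pos))).exists
    have ha0 : a < ((t 0 : ℝ) : EReal) := (htab 0).1
    have hmm : ∀ s ∈ Icc (0:ℝ) (d/2), a < ((t k + σ * s : ℝ) : EReal) := by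
      intro s hs
      have habs : |σ * s| ≤ d/2 := by
        rw [hσabs]; rw [abs_of_nonneg hs.1]; exact hs.2
      have h2 := abs_le.mp habs
      refine lt_trans ha0 (EReal.coe_lt_coe_iff.mpr ?_)
      linarith
    have hx' : ∀ s ∈ Icc (0:ℝ) (d/2),
        HasDerivAt (fun s => x (t k + σ * s)) (σ • f (x (t k + σ * s))) s := by
      intro s hs
      have hD := hsol _ (hmm s hs) (EReal.coe_lt_top _)
      have hinner : HasDerivAt (fun s : ℝ => t k + σ * s) σ s := by
        simpa using ((hasDerivAt_id s).const_mul σ).const_add (t k)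
      simpa [Function.comp_def] using hD.scomp s hinner
    have hz' : ∀ s ∈ Icc (0:ℝ) (d/2),
        HasDerivAt (fun s => z (σ * s)) (σ • f (z (σ * s))) s := by
      intro s hs
      have habs : |σ * s| ≤ d/2 := by rw [hσabs]; rw [abs_of_nonneg hs.1]; exact hs.2
      have h2 := abs_le.mp habs
      have hD := hzsol (σ * s) ⟨by linarith, by linarith⟩
      have hinner : HasDerivAt (fun s : ℝ => σ * s) σ s := by
        simpa using (hasDerivAt_id s).const_mul σ
      simpa [Function.comp_def] using hD.scomp s hinner
    have hball : ∀ s ∈ Icc (0:ℝ) (d/2),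
        closedBall (z (σ * s)) 1 ⊆ closedBall (0 : Fin n → ℝ) (R₀ + 1) := by
      intro s hs q hq
      have habs : |σ * s| ≤ d/2 := by rw [hσabs]; rw [abs_of_nonneg hs.1]; exact hs.2
      have hmem : z (σ * s) ∈ closedBall (0 : Fin n → ℝ) R₀ :=
        hR₀ ⟨σ * s, abs_le.mp habs |> fun h => ⟨h.1, h.2⟩, rfl⟩
      rw [mem_closedBall] at *
      calc dist q 0 ≤ dist q (z (σ * s)) + dist (z (σ * s)) 0 := dist_triangle _ _ _
        _ ≤ 1 + R₀ := add_le_add hq hmem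
        _ = R₀ + 1 := by ring
    have h0 : dist (x (t k + σ * 0)) (z (σ * 0)) * Real.exp (K * (d/2)) < 1 := by
      simp only [mul_zero, add_zero, hz0]
      exact lt_of_lt_of_le hk2 (min_le_left _ _)
    have hgr := gronwall_confine hKσ (by linarith) one_pos hx' hz' hball h0 (d/2)
      ⟨by linarith, le_rfl⟩
    have hfin : dist (x (t k + σ * (d/2))) (z (σ * (d/2))) < ε' := by
      refine lt_of_le_of_lt hgr ?_
      simp only [mul_zero, add_zero, hz0]
      exact lt_of_lt_of_le hk2 (min_le_right _ _)
    have hUP := hε' _ (mem_ball.mpr hfin)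
    exact absurd hUP.2 (not_lt.mpr (hlt _ (hmm (d/2) ⟨by linarith, le_rfl⟩)).le)
end

section
/- Let n be a symmetric 3×3 real matrix and A an invertible 3×3 real matrix, and define n' = (det A)⁻¹ Aᵀ n A. If n is diagonal and all its diagonal entries are strictly positive, and n' is also diagonal, then all diagonal entries of n' have the same sign, i.e. they are all strictly positive or all strictly negative. -/
/-- Under the transformation `n' = (det A)⁻¹ Aᵀ n A`, if `n` is diagonal
with strictly positive diagonal entries and `n'` is diagonal, then the diagonal entries
of `n'` all have the same sign. -/
theorem class_A_sign_invariance (n A n' : Matrix (Fin 3) (Fin 3) ℝ)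
    (hsymm : n.IsSymm) (hA : IsUnit A.det)
    (hn' : n' = (A.det)⁻¹ • (A.transpose * n * A))
    (hdiag : n.IsDiag) (hpos : ∀ i, 0 < n i i) (hdiag' : n'.IsDiag) :
    (∀ i, 0 < n' i i) ∨ (∀ i, n' i i < 0) := by
  have hd : A.det ≠ 0 := hA.ne_zero
  have hn : Matrix.diagonal n.diag = n := hdiag.diagonal_diag
  have key : ∀ i, 0 < (A.transpose * n * A) i i := by
    intro i
    have hcol : ∃ j, A j i ≠ 0 := by
      by_contra h
      push_neg at h
      exact hd (Matrix.det_eq_zero_of_column_eq_zero i h)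
    have hent : (A.transpose * n * A) i i = ∑ j, n j j * (A j i * A j i) := by
      rw [← hn]
      simp [Matrix.mul_apply, Matrix.diagonal_apply, Finset.sum_mul,
        Matrix.diag, mul_comm, mul_assoc]
      refine Finset.sum_congr rfl fun k _ => by ring
    rw [hent]
    obtain ⟨j, hj⟩ := hcol
    apply Finset.sum_pos'
    · intro k _
      exact mul_nonneg (hpos k).le (mul_self_nonneg _)
    · exact ⟨j, Finset.mem_univ j, mul_pos (hpos j) (mul_self_pos.mpr hj)⟩
  rcases lt_or_gt_of_ne hd with hneg | hpos'
  · right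
    intro i
    rw [hn']
    simpa using mul_neg_of_neg_of_pos (inv_neg''.mpr hneg) (key i)
  · left
    intro i
    rw [hn']
    simpa using mul_pos (inv_pos.mpr hpos') (key i)
end

section
/- Consider a solution of the Wainwright–Hsu system with N₂ = N₃ = 0 and N₁ > 0 satisfying the vacuum constraint. Then Σ₊' = (3/2)N₁²(2 − Σ₊) and the quantity Σ₋/(2 − Σ₊) is constant along the solution. -/
/-- `q = 2(Σ₊² + Σ₋²)`. -/
noncomputable def WHq (Sp Sm : ℝ) : ℝ := 2 * (Sp ^ 2 + Sm ^ 2)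

/-- `S₊ = (1/2)[(N₂−N₃)² − N₁(2N₁−N₂−N₃)]`. -/
noncomputable def WHSplus (N1 N2 N3 : ℝ) : ℝ :=
  (1 / 2) * ((N2 - N3) ^ 2 - N1 * (2 * N1 - N2 - N3))

/-- `S₋ = (√3/2)(N₃−N₂)(N₁−N₂−N₃)`. -/
noncomputable def WHSminus (N1 N2 N3 : ℝ) : ℝ :=
  (Real.sqrt 3 / 2) * (N3 - N2) * (N1 - N2 - N3)

/-- The Wainwright–Hsu evolution equations for Bianchi class A vacuum solutions. -/
structure WHSolution (Sp Sm N1 N2 N3 : ℝ → ℝ) : Prop where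
  hN1 : ∀ τ : ℝ, HasDerivAt N1 ((WHq (Sp τ) (Sm τ) - 4 * Sp τ) * N1 τ) τ
  hN2 : ∀ τ : ℝ, HasDerivAt N2
    ((WHq (Sp τ) (Sm τ) + 2 * Sp τ + 2 * Real.sqrt 3 * Sm τ) * N2 τ) τ
  hN3 : ∀ τ : ℝ, HasDerivAt N3
    ((WHq (Sp τ) (Sm τ) + 2 * Sp τ - 2 * Real.sqrt 3 * Sm τ) * N3 τ) τ
  hSp : ∀ τ : ℝ, HasDerivAt Sp
    (-(2 - WHq (Sp τ) (Sm τ)) * Sp τ - 3 * WHSplus (N1 τ) (N2 τ) (N3 τ)) τ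
  hSm : ∀ τ : ℝ, HasDerivAt Sm
    (-(2 - WHq (Sp τ) (Sm τ)) * Sm τ - 3 * WHSminus (N1 τ) (N2 τ) (N3 τ)) τ

/-- The vacuum Hamiltonian constraint. -/
def WHConstraint (Sp Sm N1 N2 N3 : ℝ → ℝ) : Prop :=
  ∀ τ : ℝ, Sp τ ^ 2 + Sm τ ^ 2 + (3 / 4) * ((N1 τ) ^ 2 + (N2 τ) ^ 2 + (N3 τ) ^ 2
    - 2 * (N1 τ * N2 τ + N2 τ * N3 τ + N1 τ * N3 τ)) = 1

/-- For a Bianchi II solution (`N₂ = N₃ = 0`, `N₁ > 0`) satisfying the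
constraint, `Σ₊' = (3/2)N₁²(2 − Σ₊)` and `Σ₋/(2 − Σ₊)` is constant. -/
theorem bianchi_ii_monotone (Sp Sm N1 N2 N3 : ℝ → ℝ)
    (hsol : WHSolution Sp Sm N1 N2 N3) (hcon : WHConstraint Sp Sm N1 N2 N3)
    (hN2 : ∀ τ, N2 τ = 0) (hN3 : ∀ τ, N3 τ = 0) (hN1 : ∀ τ, 0 < N1 τ) :
    (∀ τ : ℝ, HasDerivAt Sp ((3 / 2) * (N1 τ) ^ 2 * (2 - Sp τ)) τ) ∧
    (∀ τ₁ τ₂ : ℝ, Sm τ₁ / (2 - Sp τ₁) = Sm τ₂ / (2 - Sp τ₂)) := by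
  have hq : ∀ τ, WHq (Sp τ) (Sm τ) = 2 - (3 / 2) * (N1 τ) ^ 2 := by
    intro τ
    have h := hcon τ
    rw [hN2 τ, hN3 τ] at h
    unfold WHq
    nlinarith [h]
  have hden : ∀ τ, (0:ℝ) < 2 - Sp τ := by
    intro τ
    have h := hcon τ
    rw [hN2 τ, hN3 τ] at h
    nlinarith [sq_nonneg (Sm τ), sq_nonneg (Sp τ), hN1 τ, mul_pos (hN1 τ) (hN1 τ)]
  have hSp' : ∀ τ : ℝ, HasDerivAt Sp ((3 / 2) * (N1 τ) ^ 2 * (2 - Sp τ)) τ := by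
    intro τ
    have h := hsol.hSp τ
    rw [hq τ, hN2 τ, hN3 τ] at h
    unfold WHSplus at h
    convert h using 1
    ring
  refine ⟨hSp', ?_⟩
  have hSm' : ∀ τ : ℝ, HasDerivAt Sm (-((3 / 2) * (N1 τ) ^ 2) * Sm τ) τ := by
    intro τ
    have h := hsol.hSm τ
    rw [hq τ, hN2 τ, hN3 τ] at h
    unfold WHSminus at h
    convert h using 1
    ring
  have hg : ∀ τ : ℝ, HasDerivAt (fun t => Sm t / (2 - Sp t)) 0 τ := by
    intro τ
    have hd : HasDerivAt (fun t => 2 - Sp t) (-((3 / 2) * (N1 τ) ^ 2 * (2 - Sp τ))) τ :=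
      (hSp' τ).const_sub 2
    have := (hSm' τ).div hd (ne_of_gt (hden τ))
    have h0 : (-(3 / 2 * N1 τ ^ 2) * Sm τ * (2 - Sp τ) - Sm τ * -(3 / 2 * N1 τ ^ 2 * (2 - Sp τ))) / (2 - Sp τ) ^ 2 = 0 := by ring
    rw [h0] at this
    exact this
  intro τ₁ τ₂
  have key : ∀ x y : ℝ, (fun t => Sm t / (2 - Sp t)) x = (fun t => Sm t / (2 - Sp t)) y := by
    intro x y
    apply is_const_of_deriv_eq_zero (fun t => (hg t).differentiableAt)
    intro t
    exact (hg t).deriv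
  exact key τ₁ τ₂
end

section
/- Suppose real numbers Σ₊, Σ₋, N₂, N₃ satisfy −1 ≤ Σ₊ ≤ 1 and Σ₊² + Σ₋² + (3/4)(N₂ − N₃)² = 1 (the Bianchi VII₀ constraint with N₁ = 0). Then with q = 2(Σ₊² + Σ₋²): (a) |q + 2Σ₊| ≤ 6(1 + Σ₊); (b) |2√3 Σ₋ (N₂ − N₃)| ≤ 4(1 + Σ₊); (c) 0 ≤ 2 − q ≤ 4(1 + Σ₊). -/
/-- Elementary estimates from the Bianchi VII₀ constraint (N₁ = 0). -/
theorem bianchi_vii0_estimates (Sp Sm N2 N3 : ℝ)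
    (hSp : -1 ≤ Sp) (hSp' : Sp ≤ 1)
    (hcon : Sp ^ 2 + Sm ^ 2 + (3 / 4) * (N2 - N3) ^ 2 = 1) :
    |2 * (Sp ^ 2 + Sm ^ 2) + 2 * Sp| ≤ 6 * (1 + Sp) ∧
    |2 * Real.sqrt 3 * Sm * (N2 - N3)| ≤ 4 * (1 + Sp) ∧
    0 ≤ 2 - 2 * (Sp ^ 2 + Sm ^ 2) ∧ 2 - 2 * (Sp ^ 2 + Sm ^ 2) ≤ 4 * (1 + Sp) := by
  have ht : Real.sqrt 3 ^ 2 = 3 := Real.sq_sqrt (by norm_num)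
  set t := Real.sqrt 3 with htdef
  refine ⟨abs_le.2 ⟨by nlinarith [sq_nonneg (1 + Sp)], by nlinarith [sq_nonneg (1 + Sp)]⟩,
    abs_le.2 ⟨?_, ?_⟩, by nlinarith [sq_nonneg (N2 - N3)], by nlinarith [sq_nonneg Sm, sq_nonneg (1 + Sp)]⟩
  · nlinarith [sq_nonneg (Sm + t / 2 * (N2 - N3)), sq_nonneg (1 + Sp), sq_nonneg Sm]
  · nlinarith [sq_nonneg (Sm - t / 2 * (N2 - N3)), sq_nonneg (1 + Sp), sq_nonneg Sm]
end

section
/- Consider a Bianchi VII₀ solution of the Wainwright–Hsu equations with N₁ = 0 and N₂, N₃ > 0 satisfying the vacuum constraint. Then the quantity Z₋₁ = [(4/3)Σ₋² + (N₂ − N₃)²]/(N₂N₃) has non-positive derivative along the solution. -/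
noncomputable def Zm1 (Sm N2 N3 : ℝ → ℝ) (t : ℝ) : ℝ :=
  ((4 / 3) * Sm t ^ 2 + (N2 t - N3 t) ^ 2) / (N2 t * N3 t)

section

variable {Sp Sm N1 N2 N3 : ℝ → ℝ} {τ : ℝ}

theorem WHConstraint.sq_Sp_le_one (hcon : WHConstraint Sp Sm N1 N2 N3) (hN1 : N1 τ = 0) :
    Sp τ ^ 2 ≤ 1 := by
  have h := hcon τ
  rw [hN1] at h
  nlinarith [sq_nonneg (Sm τ), sq_nonneg (N2 τ - N3 τ)]

theorem WHConstraint.neg_one_le_Sp (hcon : WHConstraint Sp Sm N1 N2 N3) (hN1 : N1 τ = 0) :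
    -1 ≤ Sp τ :=
  (abs_le.mp ((sq_le_one_iff_abs_le_one _).mp (hcon.sq_Sp_le_one hN1))).1

theorem WHSolution.hasDerivAt_Zm1 (hsol : WHSolution Sp Sm N1 N2 N3) (hN1 : N1 τ = 0)
    (hN : N2 τ * N3 τ ≠ 0) :
    HasDerivAt (Zm1 Sm N2 N3) (-(16 / 3) * Sm τ ^ 2 * (1 + Sp τ) / (N2 τ * N3 τ)) τ := by
  have hnum := ((hsol.hSm τ).pow 2 |>.const_mul (4 / 3)).add
    (((hsol.hN2 τ).sub (hsol.hN3 τ)).pow 2)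
  refine (hnum.div ((hsol.hN2 τ).mul (hsol.hN3 τ)) hN).congr_deriv ?_
  simp only [WHq, WHSminus, hN1, Pi.add_apply, Pi.sub_apply, Pi.mul_apply, Pi.pow_apply]
  field_simp
  ring

end

/-- For a Bianchi VII₀ solution (`N₁ = 0`, `N₂, N₃ > 0`) satisfying the
constraint, the quantity `Z₋₁ = [(4/3)Σ₋² + (N₂−N₃)²]/(N₂N₃)` has non-positive
derivative. -/
theorem bianchi_vii0_Zm1_monotone (Sp Sm N1 N2 N3 : ℝ → ℝ)
    (hsol : WHSolution Sp Sm N1 N2 N3) (hcon : WHConstraint Sp Sm N1 N2 N3)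
    (hN1 : ∀ τ, N1 τ = 0) (hN2 : ∀ τ, 0 < N2 τ) (hN3 : ∀ τ, 0 < N3 τ) :
    ∀ τ : ℝ, ∃ d : ℝ, d ≤ 0 ∧
      HasDerivAt (fun t => ((4 / 3) * (Sm t) ^ 2 + (N2 t - N3 t) ^ 2) / (N2 t * N3 t))
        d τ := by
  intro τ
  have hpos : 0 < N2 τ * N3 τ := mul_pos (hN2 τ) (hN3 τ)
  refine ⟨_, ?_, hsol.hasDerivAt_Zm1 (hN1 τ) hpos.ne'⟩
  have hSp : 0 ≤ 1 + Sp τ := by linarith [hcon.neg_one_le_Sp (hN1 τ)]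
  apply div_nonpos_of_nonpos_of_nonneg _ hpos.le
  linarith [mul_nonneg (sq_nonneg (Sm τ)) hSp]
end

section
/- For all real z and w, −(1 − z)(1 + z)² + (3/2)w(2 − z) = (z + 2)(z − 1/2)² + (3/2)(w − 1/2)(2 − z). In particular, if −1 ≤ z ≤ 1/2 − ε/2 with 0 < ε < 1 and w ≥ 1/2 − ε²/36, then −(1 − z)(1 + z)² + (3/2)w(2 − z) ≥ ε²/8. -/
/-- Identity and inequality for the polynomial in the Bianchi VIII
iteration formula for `Σ₊`. -/
theorem bianchi_viii_polynomial (z w : ℝ) :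
    (-(1 - z) * (1 + z) ^ 2 + (3 / 2) * w * (2 - z) =
      (z + 2) * (z - 1 / 2) ^ 2 + (3 / 2) * (w - 1 / 2) * (2 - z)) ∧
    (∀ ε : ℝ, 0 < ε → ε < 1 → -1 ≤ z → z ≤ 1 / 2 - ε / 2 → w ≥ 1 / 2 - ε ^ 2 / 36 →
      -(1 - z) * (1 + z) ^ 2 + (3 / 2) * w * (2 - z) ≥ ε ^ 2 / 8) := by
  constructor
  · ring
  · intro ε hε hε1 hz1 hz2 hw
    have h1 : (z + 1) * (z - 1/2)^2 ≥ 0 := mul_nonneg (by linarith) (sq_nonneg _)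
    have h2 : (1/2 - z - ε/2) * (1/2 - z + ε/2) ≥ 0 := mul_nonneg (by linarith) (by linarith)
    have h3 : (w - 1/2 + ε^2/36) * (2 - z) ≥ 0 := mul_nonneg (by linarith) (by linarith)
    have h4 : ε^2 * (1 + z) ≥ 0 := mul_nonneg (sq_nonneg _) (by linarith)
    nlinarith [h1, h2, h3, h4]
end

section
/- Let g : ℝ → ℝ be continuous and let x̃ = (x̃₁, x̃₂) : ℝ → ℝ² solve x̃' = A x̃ + ε, where A is the antisymmetric matrix with entries A₁₂ = −g, A₂₁ = g, and ε : ℝ → ℝ² is continuous with ‖ε(τ)‖ ≤ 9 for all τ. Define ξ(τ) = ∫_{τ₀}^{τ} g(s) ds + φ₀ and x(τ) = r₀(cos ξ(τ), sin ξ(τ)), where r₀ and φ₀ are chosen so that x(τ₀) = x̃(τ₀). Then ‖x̃(τ) − x(τ)‖ ≤ 9|τ − τ₀| for all τ. -/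
/-!
Identify the plane with `ℂ`, so that the linear system `x̃' = A x̃ + ε` reads
`w' = i g w + e` with `w = x̃₁ + i x̃₂`. Passing to the frame rotating with angle `ξ`,
`z = w e^{-iξ}`, cancels the rotation: `z' = e e^{-iξ}`, which has modulus `‖e‖ ≤ 9`.
The mean value inequality bounds `|z(τ) - z(τ₀)|` by `9|τ - τ₀|`; since `z(τ₀) = r₀`,
rotating back by the isometry `e^{iξ(τ)}` gives `|w(τ) - r₀ e^{iξ(τ)}| ≤ 9|τ - τ₀|`.
-/

namespace RotatingFrame

open Complex

theorem hasDerivAt_mul_exp_neg_mul_I {w : ℝ → ℂ} {θ : ℝ → ℝ} {ω : ℝ} {e : ℂ} {τ : ℝ}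
    (hw : HasDerivAt w (ω * I * w τ + e) τ) (hθ : HasDerivAt θ ω τ) :
    HasDerivAt (fun t => w t * exp (-θ t * I)) (e * exp (-θ τ * I)) τ := by
  have hrot : HasDerivAt (fun t => exp (-θ t * I)) (exp (-θ τ * I) * (-ω * I)) τ :=
    (hθ.ofReal_comp.neg.mul_const I).cexp
  exact (hw.mul hrot).congr_deriv (by ring)

theorem norm_exp_neg_ofReal_mul_I (x : ℝ) : ‖exp (-x * I)‖ = 1 := by
  simpa using norm_exp_ofReal_mul_I (-x)

theorem norm_sub_exp_mul_le {w e : ℝ → ℂ} {θ g : ℝ → ℝ} {C : ℝ}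
    (hw : ∀ t, HasDerivAt w (g t * I * w t + e t) t) (hθ : ∀ t, HasDerivAt θ (g t) t)
    (he : ∀ t, ‖e t‖ ≤ C) (τ τ₀ : ℝ) :
    ‖w τ - exp ((θ τ - θ τ₀) * I) * w τ₀‖ ≤ C * |τ - τ₀| := by
  set z : ℝ → ℂ := fun t => w t * exp (-θ t * I)
  have hz : ‖z τ - z τ₀‖ ≤ C * ‖τ - τ₀‖ :=
    convex_univ.norm_image_sub_le_of_norm_hasDerivWithin_le
      (fun t _ => (hasDerivAt_mul_exp_neg_mul_I (hw t) (hθ t)).hasDerivWithinAt)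
      (fun t _ => by rw [norm_mul, norm_exp_neg_ofReal_mul_I, mul_one]; exact he t)
      (Set.mem_univ τ₀) (Set.mem_univ τ)
  have hback : w τ - exp ((θ τ - θ τ₀) * I) * w τ₀ = (z τ - z τ₀) * exp (θ τ * I) := by
    simp only [z, sub_mul, mul_assoc, ← Complex.exp_add]
    ring_nf
    simp
  rwa [hback, norm_mul, norm_exp_ofReal_mul_I, mul_one, ← Real.norm_eq_abs]

theorem ofReal_mul_exp_mul_I (r x : ℝ) :
    (r : ℂ) * exp (x * I) = ↑(r * Real.cos x) + ↑(r * Real.sin x) * I := by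
  rw [exp_mul_I]
  push_cast
  ring

end RotatingFrame

open RotatingFrame Complex in
theorem rotating_frame_estimate_general (g e1 e2 x1 x2 ξ : ℝ → ℝ) (τ₀ φ₀ r₀ : ℝ)
    (hg : Continuous g)
    (heps : ∀ τ : ℝ, Real.sqrt ((e1 τ) ^ 2 + (e2 τ) ^ 2) ≤ 9)
    (hx1 : ∀ τ : ℝ, HasDerivAt x1 (-(g τ) * x2 τ + e1 τ) τ)
    (hx2 : ∀ τ : ℝ, HasDerivAt x2 (g τ * x1 τ + e2 τ) τ)
    (hξ : ∀ τ : ℝ, ξ τ = (∫ s in τ₀..τ, g s) + φ₀)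
    (hinit1 : r₀ * Real.cos (ξ τ₀) = x1 τ₀)
    (hinit2 : r₀ * Real.sin (ξ τ₀) = x2 τ₀) :
    ∀ τ : ℝ, Real.sqrt ((x1 τ - r₀ * Real.cos (ξ τ)) ^ 2 +
      (x2 τ - r₀ * Real.sin (ξ τ)) ^ 2) ≤ 9 * |τ - τ₀| := by
  intro τ
  have hξ' : ∀ t, HasDerivAt ξ (g t) t := fun t =>
    ((intervalIntegral.integral_hasDerivAt_right (hg.intervalIntegrable τ₀ t)
      hg.aestronglyMeasurable.stronglyMeasurableAtFilter hg.continuousAt).add_const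
      φ₀).congr_of_eventuallyEq (.of_forall hξ)
  have hw : ∀ t, HasDerivAt (fun t => (x1 t : ℂ) + x2 t * I)
      (g t * I * (x1 t + x2 t * I) + (e1 t + e2 t * I)) t := fun t => by
    refine ((hx1 t).ofReal_comp.add ((hx2 t).ofReal_comp.mul_const I)).congr_deriv ?_
    push_cast
    linear_combination -(g t : ℂ) * x2 t * I_sq
  have he : ∀ t, ‖(e1 t : ℂ) + e2 t * I‖ ≤ 9 := fun t => by
    rw [norm_add_mul_I]; exact heps t
  have hcircle : exp ((ξ τ - ξ τ₀) * I) * (x1 τ₀ + x2 τ₀ * I)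
      = ↑(r₀ * Real.cos (ξ τ)) + ↑(r₀ * Real.sin (ξ τ)) * I := by
    rw [← hinit1, ← hinit2, ← ofReal_mul_exp_mul_I, ← ofReal_mul_exp_mul_I, mul_left_comm,
      ← Complex.exp_add]
    ring_nf
  have key := norm_sub_exp_mul_le hw hξ' he τ τ₀
  rwa [hcircle, add_sub_add_comm, ← sub_mul, ← ofReal_sub, ← ofReal_sub, norm_add_mul_I] at key

/-- The rotating-frame approximation estimate. If `x̃ = (x̃₁, x̃₂)` solves
`x̃' = A x̃ + ε` with `A` the antisymmetric matrix of angular velocity `g`, `‖ε‖ ≤ 9`,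
and `x(τ) = r₀(cos ξ(τ), sin ξ(τ))` with `ξ(τ) = ∫_{τ₀}^τ g + φ₀` agrees with `x̃`
at `τ₀`, then `‖x̃(τ) − x(τ)‖ ≤ 9|τ − τ₀|`. -/
theorem rotating_frame_estimate (g e1 e2 x1 x2 ξ : ℝ → ℝ) (τ₀ φ₀ r₀ : ℝ)
    (hg : Continuous g) (he1 : Continuous e1) (he2 : Continuous e2)
    (heps : ∀ τ : ℝ, Real.sqrt ((e1 τ) ^ 2 + (e2 τ) ^ 2) ≤ 9)
    (hx1 : ∀ τ : ℝ, HasDerivAt x1 (-(g τ) * x2 τ + e1 τ) τ)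
    (hx2 : ∀ τ : ℝ, HasDerivAt x2 (g τ * x1 τ + e2 τ) τ)
    (hξ : ∀ τ : ℝ, ξ τ = (∫ s in τ₀..τ, g s) + φ₀)
    (hinit1 : r₀ * Real.cos (ξ τ₀) = x1 τ₀)
    (hinit2 : r₀ * Real.sin (ξ τ₀) = x2 τ₀) :
    ∀ τ : ℝ, Real.sqrt ((x1 τ - r₀ * Real.cos (ξ τ)) ^ 2 +
      (x2 τ - r₀ * Real.sin (ξ τ)) ^ 2) ≤ 9 * |τ - τ₀| :=
  rotating_frame_estimate_general g e1 e2 x1 x2 ξ τ₀ φ₀ r₀ hg heps hx1 hx2 hξ hinit1 hinit2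
end

section
/- Let h : [T, ∞) → ℝ be a C¹ function and α > 0, 0 < α₁ < α₂ constants such that α·exp(−α₂h(τ)) ≤ h'(τ) ≤ α·exp(−α₁h(τ)) for all τ ≥ T. Then h'(τ) ≤ α·[exp(α₂h(T)) + α·α₂(τ − T)]^{−α₁/α₂} for all τ ≥ T. In particular, if for every pair α₁ < 2 < α₂ such bounds hold for τ sufficiently large, then h' ∈ L^p([T, ∞)) for every p > 1. -/
open Set MeasureTheory

/-- Auxiliary: integrating the lower differential inequality gives the power-law bound. -/
lemma bianchi_aux (h h' : ℝ → ℝ) (T α α₁ α₂ : ℝ)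
    (hd : ∀ τ ∈ Ici T, HasDerivAt h (h' τ) τ)
    (hα : 0 < α) (hα₁ : 0 < α₁) (hα₁₂ : α₁ < α₂)
    (hineq : ∀ τ ∈ Ici T,
      α * Real.exp (-α₂ * h τ) ≤ h' τ ∧ h' τ ≤ α * Real.exp (-α₁ * h τ)) :
    ∀ τ ∈ Ici T,
      h' τ ≤ α * (Real.exp (α₂ * h T) + α * α₂ * (τ - T)) ^ (-(α₁ / α₂)) := by
  have hα₂ : 0 < α₂ := hα₁.trans hα₁₂
  set f : ℝ → ℝ := fun τ => Real.exp (α₂ * h τ) with hf_def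
  have hf : ∀ x ∈ Ici T, HasDerivAt f (Real.exp (α₂ * h x) * (α₂ * h' x)) x := by
    intro x hx
    exact ((hd x hx).const_mul α₂).exp
  -- MVT-style lower bound on f
  have key : ∀ τ ∈ Ici T, α * α₂ * (τ - T) ≤ f τ - f T := by
    have hcontf : ContinuousOn f (Ici T) := fun x hx =>
      (hf x hx).continuousAt.continuousWithinAt
    have hdiff : DifferentiableOn ℝ f (interior (Ici T)) := by
      intro x hx
      rw [interior_Ici] at hx
      exact ((hf x (mem_Ici.2 (le_of_lt (mem_Ioi.1 hx)))).differentiableAt).differentiableWithinAt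
    have hge : ∀ x ∈ interior (Ici T), α * α₂ ≤ deriv f x := by
      intro x hx
      rw [interior_Ici] at hx
      have hx' : x ∈ Ici T := mem_Ici.2 (le_of_lt (mem_Ioi.1 hx))
      rw [(hf x hx').deriv]
      have h1 : α * Real.exp (-α₂ * h x) ≤ h' x := (hineq x hx').1
      have hpos : (0:ℝ) < Real.exp (α₂ * h x) := Real.exp_pos _
      have hprod : Real.exp (-α₂ * h x) * Real.exp (α₂ * h x) = 1 := by
        rw [← Real.exp_add]; ring_nf; exact Real.exp_zero
      have h2 : α * Real.exp (-α₂ * h x) * Real.exp (α₂ * h x)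
          ≤ h' x * Real.exp (α₂ * h x) := mul_le_mul_of_nonneg_right h1 hpos.le
      rw [mul_assoc, hprod, mul_one] at h2
      have h3 := mul_le_mul_of_nonneg_left h2 hα₂.le
      nlinarith [h3]
    intro τ hτ
    exact (convex_Ici T).mul_sub_le_image_sub_of_le_deriv hcontf hdiff hge T
      self_mem_Ici τ hτ hτ
  intro τ hτ
  have hBpos : (0:ℝ) < Real.exp (α₂ * h T) + α * α₂ * (τ - T) := by
    have : (0:ℝ) ≤ α * α₂ * (τ - T) := by
      apply mul_nonneg (by positivity)
      simpa using sub_nonneg.2 (mem_Ici.1 hτ)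
    nlinarith [Real.exp_pos (α₂ * h T)]
  have hBle : Real.exp (α₂ * h T) + α * α₂ * (τ - T) ≤ Real.exp (α₂ * h τ) := by
    have := key τ hτ
    simp only [hf_def] at this
    linarith
  have hexp_eq : Real.exp (α₂ * h τ) ^ (-(α₁ / α₂)) = Real.exp (-α₁ * h τ) := by
    rw [Real.rpow_def_of_pos (Real.exp_pos _), Real.log_exp]
    congr 1
    field_simp
  have hrpow : (Real.exp (α₂ * h T) + α * α₂ * (τ - T)) ^ (-(α₁ / α₂))
      ≥ Real.exp (α₂ * h τ) ^ (-(α₁ / α₂)) := by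
    apply Real.rpow_le_rpow_of_nonpos hBpos hBle
    have : (0:ℝ) < α₁ / α₂ := div_pos hα₁ hα₂
    linarith
  calc h' τ ≤ α * Real.exp (-α₁ * h τ) := (hineq τ hτ).2
    _ = α * Real.exp (α₂ * h τ) ^ (-(α₁ / α₂)) := by rw [hexp_eq]
    _ ≤ α * (Real.exp (α₂ * h T) + α * α₂ * (τ - T)) ^ (-(α₁ / α₂)) := by
        exact mul_le_mul_of_nonneg_left hrpow hα.le

/-- Integrating the differential inequality
`α·exp(−α₂h) ≤ h' ≤ α·exp(−α₁h)` yields a power-law decay bound on `h'`, and if such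
bounds hold eventually for all `α₁ < 2 < α₂`, then `h' ∈ L^p([T, ∞))` for all `p > 1`. -/
theorem bianchi_vii0_decay (h h' : ℝ → ℝ) (T α α₁ α₂ : ℝ)
    (hd : ∀ τ ∈ Ici T, HasDerivAt h (h' τ) τ) (hcont : ContinuousOn h' (Ici T))
    (hα : 0 < α) (hα₁ : 0 < α₁) (hα₁₂ : α₁ < α₂)
    (hineq : ∀ τ ∈ Ici T,
      α * Real.exp (-α₂ * h τ) ≤ h' τ ∧ h' τ ≤ α * Real.exp (-α₁ * h τ)) :
    (∀ τ ∈ Ici T,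
      h' τ ≤ α * (Real.exp (α₂ * h T) + α * α₂ * (τ - T)) ^ (-(α₁ / α₂))) ∧
    ((∀ β₁ β₂ : ℝ, 0 < β₁ → β₁ < 2 → 2 < β₂ → ∃ T' : ℝ, T ≤ T' ∧ ∀ τ ∈ Ici T',
        α * Real.exp (-β₂ * h τ) ≤ h' τ ∧ h' τ ≤ α * Real.exp (-β₁ * h τ)) →
      ∀ p : ℝ, 1 < p → IntegrableOn (fun τ => |h' τ| ^ p) (Ici T)) := by
  constructor
  · exact bianchi_aux h h' T α α₁ α₂ hd hα hα₁ hα₁₂ hineq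
  · intro H p hp
    have hp0 : (0:ℝ) < p := by linarith
    -- choose β₁, β₂
    set ε : ℝ := (p - 1) / (p + 1) with hε_def
    have hp1 : (0:ℝ) < p + 1 := by linarith
    have hε_pos : 0 < ε := div_pos (by linarith) hp1
    have hε_lt1 : ε < 1 := by
      rw [hε_def, div_lt_one hp1]; linarith
    have hεid : ε * (p + 1) = p - 1 := by
      rw [hε_def]; field_simp
    set β₁ : ℝ := 2 - ε with hβ₁_def
    set β₂ : ℝ := 2 + ε with hβ₂_def
    have hβ₁_pos : 0 < β₁ := by simp only [hβ₁_def]; linarith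
    have hβ₁_lt : β₁ < 2 := by simp only [hβ₁_def]; linarith
    have hβ₂_gt : 2 < β₂ := by simp only [hβ₂_def]; linarith
    have hβ₂_pos : 0 < β₂ := by linarith
    have hβ₁₂ : β₁ < β₂ := by linarith
    set r : ℝ := β₁ / β₂ * p with hr_def
    have hr_gt : 1 < r := by
      rw [hr_def, div_mul_eq_mul_div, lt_div_iff₀ hβ₂_pos]
      simp only [hβ₁_def, hβ₂_def]
      nlinarith
    obtain ⟨T', hTT', hb⟩ := H β₁ β₂ hβ₁_pos hβ₁_lt hβ₂_gt
    -- the pointwise bound on Ici T'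
    have hbound := bianchi_aux h h' T' α β₁ β₂
      (fun τ hτ => hd τ (le_trans hTT' hτ)) hα hβ₁_pos hβ₁₂ hb
    -- cutoff S
    set S : ℝ := 2 * max T' 1 with hS_def
    have hmax1 : (1:ℝ) ≤ max T' 1 := le_max_right _ _
    have hS_pos : (0:ℝ) < S := by simp only [hS_def]; linarith
    have hT'S : T' ≤ S := by
      have : T' ≤ max T' 1 := le_max_left _ _
      simp only [hS_def]; linarith
    have hTS : T ≤ S := le_trans hTT' hT'S
    -- integrability on Ici S by comparison with C * τ ^ (-r)
    set C : ℝ := α ^ p * (α * β₂ / 2) ^ (-r) with hC_def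
    have hαβ2 : (0:ℝ) < α * β₂ / 2 := by positivity
    have hg_int : IntegrableOn (fun τ => C * τ ^ (-r)) (Ici S) := by
      rw [integrableOn_Ici_iff_integrableOn_Ioi]
      exact (integrableOn_Ioi_rpow_of_lt (by linarith) hS_pos).const_mul C
    have hmeas : AEStronglyMeasurable (fun τ => |h' τ| ^ p)
        (volume.restrict (Ici S)) := by
      apply ContinuousOn.aestronglyMeasurable _ measurableSet_Ici
      apply ContinuousOn.rpow_const
      · exact (hcont.mono (Ici_subset_Ici.2 hTS)).abs
      · intro x _; exact Or.inr hp0.le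
    have hintS : IntegrableOn (fun τ => |h' τ| ^ p) (Ici S) := by
      apply Integrable.mono' hg_int hmeas
      rw [ae_restrict_iff' measurableSet_Ici]
      apply ae_of_all
      intro τ hτ
      have hτT' : τ ∈ Ici T' := le_trans hT'S hτ
      have hτ_pos : 0 < τ := lt_of_lt_of_le hS_pos hτ
      have hh'pos : 0 < h' τ := by
        have h1 := (hb τ hτT').1
        have := Real.exp_pos (-β₂ * h τ)
        nlinarith
      have hB_pos : (0:ℝ) < Real.exp (β₂ * h T') + α * β₂ * (τ - T') := by
        have : (0:ℝ) ≤ α * β₂ * (τ - T') := by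
          apply mul_nonneg (by positivity)
          have : T' ≤ τ := hτT'
          linarith
        nlinarith [Real.exp_pos (β₂ * h T')]
      have hB_ge : α * β₂ / 2 * τ ≤ Real.exp (β₂ * h T') + α * β₂ * (τ - T') := by
        have hT'τ2 : T' ≤ τ / 2 := by
          have h1 : T' ≤ max T' 1 := le_max_left _ _
          have h2 : 2 * max T' 1 ≤ τ := hτ
          linarith
        have : α * β₂ * (τ / 2) ≤ α * β₂ * (τ - T') := by
          apply mul_le_mul_of_nonneg_left _ (by positivity)
          linarith
        nlinarith [Real.exp_pos (β₂ * h T')]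
      -- chain of inequalities
      have step1 : |h' τ| ^ p = h' τ ^ p := by rw [abs_of_pos hh'pos]
      have step2 : h' τ ^ p ≤
          (α * (Real.exp (β₂ * h T') + α * β₂ * (τ - T')) ^ (-(β₁ / β₂))) ^ p :=
        Real.rpow_le_rpow hh'pos.le (hbound τ hτT') hp0.le
      have step3 : (α * (Real.exp (β₂ * h T') + α * β₂ * (τ - T')) ^ (-(β₁ / β₂))) ^ p
          = α ^ p * (Real.exp (β₂ * h T') + α * β₂ * (τ - T')) ^ (-r) := by
        rw [Real.mul_rpow hα.le (Real.rpow_nonneg hB_pos.le _),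
          ← Real.rpow_mul hB_pos.le]
        congr 1
        rw [hr_def]; ring
      have step4 : (Real.exp (β₂ * h T') + α * β₂ * (τ - T')) ^ (-r)
          ≤ (α * β₂ / 2 * τ) ^ (-r) := by
        apply Real.rpow_le_rpow_of_nonpos (by positivity) hB_ge
        linarith
      have step5 : (α * β₂ / 2 * τ) ^ (-r) = (α * β₂ / 2) ^ (-r) * τ ^ (-r) :=
        Real.mul_rpow hαβ2.le hτ_pos.le
      have hnorm : ‖|h' τ| ^ p‖ = |h' τ| ^ p := by
        rw [Real.norm_eq_abs, abs_of_nonneg (Real.rpow_nonneg (abs_nonneg _) _)]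
      rw [hnorm, step1, hC_def]
      calc h' τ ^ p ≤ α ^ p * (Real.exp (β₂ * h T') + α * β₂ * (τ - T')) ^ (-r) := by
            rw [← step3]; exact step2
        _ ≤ α ^ p * ((α * β₂ / 2) ^ (-r) * τ ^ (-r)) := by
            rw [← step5]
            exact mul_le_mul_of_nonneg_left step4 (by positivity)
        _ = α ^ p * (α * β₂ / 2) ^ (-r) * τ ^ (-r) := by ring
    -- integrability on the compact part
    have hintc : IntegrableOn (fun τ => |h' τ| ^ p) (Icc T S) := by
      apply ContinuousOn.integrableOn_Icc
      apply ContinuousOn.rpow_const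
      · exact (hcont.mono Icc_subset_Ici_self).abs
      · intro x _; exact Or.inr hp0.le
    have := hintc.union hintS
    apply this.mono_set
    intro x hx
    by_cases hxS : x ≤ S
    · exact Or.inl ⟨hx, hxS⟩
    · exact Or.inr (le_of_not_ge hxS)
end
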